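/- Let 0 ≤ μ < L, β₀ > 0, ε ≥ 0, let θ₀, θ₁ ∈ (0,1] with θ₁ ≥ μ/L, and let ϑ₀, ϑ₁ > 0 satisfy (1 − θ₁)/ϑ₁ = 1/ϑ₀. Let (x*, λ*) ∈ ℝ^{m×n} × ℝ^{m×n} satisfy Πx* = 0 and ∇f(x*) + Πλ* = 0. Given x⁻, x ∈ ℝ^{m×n}, define y = x + ((Lθ₁ − μ)/(L − μ))·((1 − θ₀)/θ₀)·(x − x⁻) and z = y − (1/L)∇f(y). Suppose x⁺, δ ∈ ℝ^{m×n} satisfy ‖δ‖_F ≤ √(2ε/L), (β₀/ϑ₁)‖Πδ‖²_F ≤ 2ε, and L(x⁺ − z + δ) + (β₀/ϑ₁)Π(x⁺ + δ) = 0. Define w = x/θ₀ − ((1 − θ₀)/θ₀)·x⁻, w⁺ = x⁺/θ₁ − ((1 − θ₁)/θ₁)·x, ρ = f(x) − f(x*) + ⟨λ*, Πx⟩, and ρ⁺ = f(x⁺) − f(x*) + ⟨λ*, Πx⁺⟩. Then ρ⁺ + (ϑ₁/(2β₀))‖(β₀/ϑ₁)Πx⁺ − λ*‖²_F + (Lθ₁²/2)‖w⁺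 − x*‖²_F ≤ (1 − θ₁)ρ + (ϑ₁/(2β₀))‖(β₀/ϑ₀)Πx − λ*‖²_F + ε + ((Lθ₁ − μ)θ₁/2)‖w − x*‖²_F + Lθ₁·√(2ε/L)·‖w⁺ − x*‖_F. -/

import Mathlib

/-!
Bound `f x⁺` from above by `L`-smoothness at the extrapolated point `y`, and `f x`, `f x*` from
below by `μ`-strong convexity at `y`; with weights `1 - θ₁`, `θ₁` the linear terms combine into
`θ₁ ⟪∇f y, w⁺ - x*⟫`. The optimality condition of the inexact step writes `∇f y` through
`y - x⁺`, `δ` and the multiplier `(β₀/ϑ₁) Π (x⁺ + δ)`. The primal quadratic terms then collapse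
exactly to the change of `‖w - x*‖²`, plus a multiple of `‖w - x‖²` whose coefficient is `≤ 0`
precisely because the momentum weight `(Lθ₁ - μ)/(L - μ)` is at most `θ₁`. Since `Π x* = 0`, the
multiplier terms only see `θ₁ Π (w⁺ - x*) = Π x⁺ - (1 - θ₁) Π x`, and the three-point identity
with Young's inequality for the error `Π δ` turns them into the change of `‖(β₀/ϑ) Π x - λ*‖²`;
the relation `(1 - θ₁)/ϑ₁ = 1/ϑ₀` matches the two dual centres. Cauchy–Schwarz on
`⟪δ, w⁺ - x*⟫` gives the last term.
-/

open scoped RealInnerProductSpace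

/-- The column-average operator `x ↦ (1/m)·1 1ᵀ x` on `ℝ^{m×n}`
(viewed as a Euclidean space with the Frobenius inner product). -/
noncomputable def colAvg (m n : ℕ) (x : EuclideanSpace ℝ (Fin m × Fin n)) :
    EuclideanSpace ℝ (Fin m × Fin n) :=
  WithLp.toLp 2 (fun p : Fin m × Fin n => (m : ℝ)⁻¹ * ∑ k : Fin m, x (k, p.2))

/-- The operator `Π = I − (1/m)·1 1ᵀ` acting on `ℝ^{m×n}`. -/
noncomputable def cProj (m n : ℕ) (x : EuclideanSpace ℝ (Fin m × Fin n)) :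
    EuclideanSpace ℝ (Fin m × Fin n) :=
  x - colAvg m n x

section InnerProductSpace

variable {V : Type*} [NormedAddCommGroup V] [InnerProductSpace ℝ V]

theorem LinearMap.IsSymmetricProjection.inner_map_eq_inner_map_map {P : V →ₗ[ℝ] V}
    (hP : P.IsSymmetricProjection) (a b : V) : ⟪P a, b⟫ = ⟪P a, P b⟫ := by
  rw [← hP.isSymmetric, ← Module.End.mul_apply, hP.isIdempotentElem.eq]

theorem inner_sub_sub_le (l u v e : V) :
    ⟪l - u - e, u - v⟫ ≤ (‖v - l‖ ^ 2 - ‖u - l‖ ^ 2 + ‖e‖ ^ 2) / 2 := by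
  rw [show v - l = (u - l) - (u - v) by abel, norm_sub_sq_real,
    show l - u - e = -((u - l) + e) by abel, inner_neg_left, inner_add_left]
  -- the gap between the two sides is `‖u - v + e‖ ^ 2 / 2`
  have hsq := norm_add_sq_real (u - v) e
  rw [real_inner_comm] at hsq
  linarith [sq_nonneg ‖u - v + e‖]

theorem momentum_step_dual_le {P : V →ₗ[ℝ] V} (hP : P.IsSymmetricProjection) {c θ ε : ℝ}
    (hc : 0 < c) {lam x xs xp wp δ : V} (hxs : P xs = 0) (hxp : xp = θ • wp + (1 - θ) • x)
    (hδ : c * ‖P δ‖ ^ 2 ≤ 2 * ε) :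
    ⟪lam, P xp⟫ - (1 - θ) * ⟪lam, P x⟫ - θ * ⟪c • P (xp + δ), wp - xs⟫ ≤
      (‖(c * (1 - θ)) • P x - lam‖ ^ 2 - ‖c • P xp - lam‖ ^ 2) / (2 * c) + ε := by
  have hproj : θ • P (wp - xs) = P xp - (1 - θ) • P x := by
    simp only [hxp, map_sub, map_add, map_smul, hxs]; module
  have hlhs : c * (⟪lam, P xp⟫ - (1 - θ) * ⟪lam, P x⟫ - θ * ⟪c • P (xp + δ), wp - xs⟫)
      = ⟪lam - c • P xp - c • P δ, c • P xp - (c * (1 - θ)) • P x⟫ := by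
    rw [real_inner_smul_left, hP.inner_map_eq_inner_map_map, mul_left_comm θ,
      ← real_inner_smul_right (P (xp + δ)) _ θ, hproj]
    simp only [map_add, inner_sub_left, inner_sub_right, inner_add_left, real_inner_smul_left,
      real_inner_smul_right]
    ring
  have hnorm : ‖c • P δ‖ ^ 2 = c ^ 2 * ‖P δ‖ ^ 2 := by
    rw [norm_smul, mul_pow, Real.norm_eq_abs, sq_abs]
  have key := inner_sub_sub_le lam (c • P xp) ((c * (1 - θ)) • P x) (c • P δ)
  rw [← mul_le_mul_iff_of_pos_left hc, hlhs, mul_add, mul_div_assoc', mul_comm 2 c,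
    mul_div_mul_left _ _ hc.ne']
  nlinarith [mul_le_mul_of_nonneg_left hδ hc.le]

theorem le_convex_comb_of_smooth_of_strongConvex {f : V → ℝ} {gf : V → V} {L μ : ℝ}
    (hsmooth : ∀ a b, f b ≤ f a + ⟪gf a, b - a⟫ + (L / 2) * ‖b - a‖ ^ 2)
    (hsconv : ∀ a b, f a + ⟪gf a, b - a⟫ + (μ / 2) * ‖b - a‖ ^ 2 ≤ f b)
    {θ : ℝ} (hθ : 0 ≤ θ) (hθ' : θ ≤ 1) (x xs y xp : V) :
    f xp ≤ (1 - θ) * f x + θ * f xs + ⟪gf y, xp - ((1 - θ) • x + θ • xs)⟫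
      + (L / 2) * ‖xp - y‖ ^ 2 - (μ / 2) * ((1 - θ) * ‖x - y‖ ^ 2 + θ * ‖xs - y‖ ^ 2) := by
  have hsplit : ⟪gf y, xp - ((1 - θ) • x + θ • xs)⟫
      = ⟪gf y, xp - y⟫ - (1 - θ) * ⟪gf y, x - y⟫ - θ * ⟪gf y, xs - y⟫ := by
    rw [show xp - ((1 - θ) • x + θ • xs) = (xp - y) - (1 - θ) • (x - y) - θ • (xs - y) by
      module]
    simp only [inner_sub_right, real_inner_smul_right]
  nlinarith [hsmooth y xp, mul_le_mul_of_nonneg_left (hsconv y x) (sub_nonneg.mpr hθ'),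
    mul_le_mul_of_nonneg_left (hsconv y xs) hθ]

theorem momentum_identity {L μ θ α : ℝ} (hα : α * (L - μ) = L * θ - μ)
    {x xs w wp y xp : V} (hy : y = x + α • (w - x)) (hxp : xp = θ • wp + (1 - θ) • x) :
    θ * L * ⟪y - xp, wp - xs⟫ + (L / 2) * ‖xp - y‖ ^ 2
        - (μ / 2) * ((1 - θ) * ‖x - y‖ ^ 2 + θ * ‖xs - y‖ ^ 2)
      = -(L * θ ^ 2 / 2) * ‖wp - xs‖ ^ 2 + ((L * θ - μ) * θ / 2) * ‖w - xs‖ ^ 2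
        + ((L * θ - μ) * (α - θ) / 2) * ‖w - x‖ ^ 2 := by
  have e1 : y - xp = θ • (x - xs) + α • (w - x) - θ • (wp - xs) := by rw [hy, hxp]; module
  have e2 : xp - y = θ • (wp - xs) - θ • (x - xs) - α • (w - x) := by rw [hy, hxp]; module
  have e3 : x - y = -(α • (w - x)) := by rw [hy]; module
  have e4 : xs - y = -((x - xs) + α • (w - x)) := by rw [hy]; module
  have e5 : w - xs = (x - xs) + (w - x) := by module
  rw [e1, e2, e3, e4, e5]
  generalize x - xs = A, w - x = D, wp - xs = C
  simp only [← real_inner_self_eq_norm_sq, inner_sub_left, inner_sub_right, inner_add_left,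
    inner_add_right, real_inner_smul_left, real_inner_smul_right, inner_neg_left,
    inner_neg_right]
  rw [real_inner_comm A D, real_inner_comm A C, real_inner_comm D C]
  linear_combination (θ * ⟪A, D⟫ + α / 2 * ⟪D, D⟫) * hα

theorem momentum_step_primal_le {f : V → ℝ} {gf : V → V} {L μ : ℝ}
    (hsmooth : ∀ a b, f b ≤ f a + ⟪gf a, b - a⟫ + (L / 2) * ‖b - a‖ ^ 2)
    (hsconv : ∀ a b, f a + ⟪gf a, b - a⟫ + (μ / 2) * ‖b - a‖ ^ 2 ≤ f b)
    (hμ : 0 ≤ μ) (hμL : μ < L) {θ : ℝ} (hθ : 0 ≤ θ) (hθ' : θ ≤ 1) (hθμ : μ / L ≤ θ)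
    {x xs w wp y xp δ ℓ : V} (hy : y = x + ((L * θ - μ) / (L - μ)) • (w - x))
    (hxp : xp = θ • wp + (1 - θ) • x) (hgrad : gf y = L • (y - xp) - L • δ - ℓ) :
    f xp ≤ (1 - θ) * f x + θ * f xs - θ * ⟪ℓ, wp - xs⟫ - (L * θ ^ 2 / 2) * ‖wp - xs‖ ^ 2
      + ((L * θ - μ) * θ / 2) * ‖w - xs‖ ^ 2 + L * θ * ‖δ‖ * ‖wp - xs‖ := by
  set α := (L * θ - μ) / (L - μ)
  have hLμ : 0 < L - μ := sub_pos.mpr hμL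
  have hL : 0 < L := hμ.trans_lt hμL
  have hα : α * (L - μ) = L * θ - μ := div_mul_cancel₀ _ hLμ.ne'
  have hLθμ : 0 ≤ L * θ - μ := by rwa [div_le_iff₀ hL, mul_comm, ← sub_nonneg] at hθμ
  have hαθ : α ≤ θ := by
    rw [div_le_iff₀ hLμ]; nlinarith [mul_nonneg (sub_nonneg.mpr hθ') hμ]
  have hcomb : xp - ((1 - θ) • x + θ • xs) = θ • (wp - xs) := by rw [hxp]; module
  have hdescent := le_convex_comb_of_smooth_of_strongConvex hsmooth hsconv hθ hθ' x xs y xp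
  rw [hcomb, real_inner_smul_right, hgrad, inner_sub_left, inner_sub_left, real_inner_smul_left,
    real_inner_smul_left] at hdescent
  have hmomentum := momentum_identity (xs := xs) hα hy hxp
  have hδ : -⟪δ, wp - xs⟫ ≤ ‖δ‖ * ‖wp - xs‖ :=
    neg_le.mp (abs_le.mp (abs_real_inner_le_norm δ (wp - xs))).1
  have hdrop : ((L * θ - μ) * (α - θ) / 2) * ‖w - x‖ ^ 2 ≤ 0 :=
    mul_nonpos_of_nonpos_of_nonneg
      (by nlinarith [mul_nonpos_of_nonneg_of_nonpos hLθμ (sub_nonpos.mpr hαθ)]) (sq_nonneg _)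
  linarith [mul_le_mul_of_nonneg_left hδ (mul_nonneg hL.le hθ)]

end InnerProductSpace

section ColumnCentering

variable {m n : ℕ}

noncomputable def colAvgₗ (m n : ℕ) :
    EuclideanSpace ℝ (Fin m × Fin n) →ₗ[ℝ] EuclideanSpace ℝ (Fin m × Fin n) where
  toFun := colAvg m n
  map_add' x y := by ext p; simp [colAvg, Finset.sum_add_distrib, mul_add]
  map_smul' c x := by ext p; simp [colAvg, ← Finset.mul_sum]; ring

noncomputable def cProjₗ (m n : ℕ) :
    EuclideanSpace ℝ (Fin m × Fin n) →ₗ[ℝ] EuclideanSpace ℝ (Fin m × Fin n) :=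
  1 - colAvgₗ m n

theorem cProjₗ_apply (x : EuclideanSpace ℝ (Fin m × Fin n)) : cProjₗ m n x = cProj m n x :=
  rfl

theorem inner_colAvg (x y : EuclideanSpace ℝ (Fin m × Fin n)) :
    ⟪colAvg m n x, y⟫ = (m : ℝ)⁻¹ * ∑ j, (∑ k, x (k, j)) * ∑ i, y (i, j) := by
  simp only [colAvg, PiLp.inner_apply, Fintype.sum_prod_type]
  rw [Finset.sum_comm, Finset.mul_sum]
  refine Finset.sum_congr rfl fun j _ => ?_
  simp only [RCLike.inner_apply, conj_trivial, Finset.mul_sum, Finset.sum_mul]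
  exact Finset.sum_congr rfl fun _ _ => Finset.sum_congr rfl fun _ _ => by ring

theorem colAvg_colAvg (x : EuclideanSpace ℝ (Fin m × Fin n)) :
    colAvg m n (colAvg m n x) = colAvg m n x := by
  ext p
  simp [colAvg, ← mul_assoc, by simpa using mul_inv_mul_cancel (m : ℝ)⁻¹]

theorem isSymmetricProjection_cProjₗ : (cProjₗ m n).IsSymmetricProjection where
  isIdempotentElem := IsIdempotentElem.one_sub <| LinearMap.ext colAvg_colAvg
  isSymmetric := LinearMap.IsSymmetric.one.sub fun x y => by
    change ⟪colAvg m n x, y⟫ = ⟪x, colAvg m n y⟫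
    rw [inner_colAvg, real_inner_comm, inner_colAvg]
    simp only [mul_comm]

end ColumnCentering

theorem stmt6_general (m n : ℕ) (L μ : ℝ) (hμ : 0 ≤ μ) (hμL : μ < L)
    (f : EuclideanSpace ℝ (Fin m × Fin n) → ℝ)
    (gf : EuclideanSpace ℝ (Fin m × Fin n) → EuclideanSpace ℝ (Fin m × Fin n))
    -- `f` is `L`-smooth with gradient `gf`
    (hsmooth : ∀ a b, f b ≤ f a + ⟪gf a, b - a⟫ + (L / 2) * ‖b - a‖ ^ 2)
    -- `f` is `μ`-strongly convex with gradient `gf`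
    (hsconv : ∀ a b, f a + ⟪gf a, b - a⟫ + (μ / 2) * ‖b - a‖ ^ 2 ≤ f b)
    (β₀ ε θ₀ θ₁ ϑ₀ ϑ₁ : ℝ)
    (hβ₀ : 0 < β₀)
    (hθ₀ : 0 < θ₀) (hθ₁ : 0 < θ₁) (hθ₁' : θ₁ ≤ 1)
    (hθ₁μ : μ / L ≤ θ₁) (hϑ₁ : 0 < ϑ₁)
    (hϑ : (1 - θ₁) / ϑ₁ = 1 / ϑ₀)
    (xs lam : EuclideanSpace ℝ (Fin m × Fin n))
    (hxs : cProj m n xs = 0)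
    (xm x y z xp δ w wp : EuclideanSpace ℝ (Fin m × Fin n))
    (hy : y = x + (((L * θ₁ - μ) / (L - μ)) * ((1 - θ₀) / θ₀)) • (x - xm))
    (hz : z = y - L⁻¹ • gf y)
    (hδ1 : ‖δ‖ ≤ Real.sqrt (2 * ε / L))
    (hδ2 : (β₀ / ϑ₁) * ‖cProj m n δ‖ ^ 2 ≤ 2 * ε)
    (hopt : L • (xp - z + δ) + (β₀ / ϑ₁) • cProj m n (xp + δ) = 0)
    (hw : w = θ₀⁻¹ • x - ((1 - θ₀) / θ₀) • xm)
    (hwp : wp = θ₁⁻¹ • xp - ((1 - θ₁) / θ₁) • x)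
    (ρ ρp : ℝ)
    (hρ : ρ = f x - f xs + ⟪lam, cProj m n x⟫)
    (hρp : ρp = f xp - f xs + ⟪lam, cProj m n xp⟫) :
    ρp + (ϑ₁ / (2 * β₀)) * ‖(β₀ / ϑ₁) • cProj m n xp - lam‖ ^ 2
        + (L * θ₁ ^ 2 / 2) * ‖wp - xs‖ ^ 2 ≤
      (1 - θ₁) * ρ + (ϑ₁ / (2 * β₀)) * ‖(β₀ / ϑ₀) • cProj m n x - lam‖ ^ 2 + ε
        + ((L * θ₁ - μ) * θ₁ / 2) * ‖w - xs‖ ^ 2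
        + L * θ₁ * Real.sqrt (2 * ε / L) * ‖wp - xs‖ := by
  have hL : 0 < L := hμ.trans_lt hμL
  have hxp : xp = θ₁ • wp + (1 - θ₁) • x := by
    rw [hwp, smul_sub, smul_smul, smul_smul, mul_inv_cancel₀ hθ₁.ne', mul_div_cancel₀ _ hθ₁.ne']
    module
  have hy' : y = x + ((L * θ₁ - μ) / (L - μ)) • (w - x) := by
    rw [hy, hw, show θ₀⁻¹ = (1 - θ₀) / θ₀ + 1 by field_simp; ring]
    module
  have hgrad : gf y = L • (y - xp) - L • δ - (β₀ / ϑ₁) • cProj m n (xp + δ) := by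
    have hgy : gf y = L • (y - z) := by
      rw [hz, sub_sub_cancel, smul_smul, mul_inv_cancel₀ hL.ne', one_smul]
    rw [hgy]
    linear_combination (norm := module) hopt
  have hprimal :=
    momentum_step_primal_le (xs := xs) hsmooth hsconv hμ hμL hθ₁.le hθ₁' hθ₁μ hy' hxp hgrad
  have hdual :=
    momentum_step_dual_le isSymmetricProjection_cProjₗ (div_pos hβ₀ hϑ₁) (lam := lam) hxs hxp hδ2
  have hcentre : β₀ / ϑ₁ * (1 - θ₁) = β₀ / ϑ₀ := by
    rw [mul_comm, ← mul_div_assoc, mul_comm, mul_div_assoc, hϑ, mul_one_div]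
  have hweight : ∀ a : ℝ, a / (2 * (β₀ / ϑ₁)) = ϑ₁ / (2 * β₀) * a := fun a => by
    field_simp
  simp only [cProjₗ_apply, hcentre, hweight] at hdual
  have herror : L * θ₁ * ‖δ‖ * ‖wp - xs‖ ≤ L * θ₁ * Real.sqrt (2 * ε / L) * ‖wp - xs‖ := by
    gcongr
  rw [hρ, hρp]
  linarith

theorem stmt6 (m n : ℕ) (hm : 0 < m) (L μ : ℝ) (hμ : 0 ≤ μ) (hμL : μ < L)
    (f : EuclideanSpace ℝ (Fin m × Fin n) → ℝ)
    (gf : EuclideanSpace ℝ (Fin m × Fin n) → EuclideanSpace ℝ (Fin m × Fin n))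
    -- `f` is `L`-smooth with gradient `gf`
    (hsmooth : ∀ a b, f b ≤ f a + ⟪gf a, b - a⟫ + (L / 2) * ‖b - a‖ ^ 2)
    -- `f` is `μ`-strongly convex with gradient `gf`
    (hsconv : ∀ a b, f a + ⟪gf a, b - a⟫ + (μ / 2) * ‖b - a‖ ^ 2 ≤ f b)
    (β₀ ε θ₀ θ₁ ϑ₀ ϑ₁ : ℝ)
    (hβ₀ : 0 < β₀) (hε : 0 ≤ ε)
    (hθ₀ : 0 < θ₀) (hθ₀' : θ₀ ≤ 1) (hθ₁ : 0 < θ₁) (hθ₁' : θ₁ ≤ 1)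
    (hθ₁μ : μ / L ≤ θ₁) (hϑ₀ : 0 < ϑ₀) (hϑ₁ : 0 < ϑ₁)
    (hϑ : (1 - θ₁) / ϑ₁ = 1 / ϑ₀)
    (xs lam : EuclideanSpace ℝ (Fin m × Fin n))
    (hxs : cProj m n xs = 0) (hlam : gf xs + cProj m n lam = 0)
    (xm x y z xp δ w wp : EuclideanSpace ℝ (Fin m × Fin n))
    (hy : y = x + (((L * θ₁ - μ) / (L - μ)) * ((1 - θ₀) / θ₀)) • (x - xm))
    (hz : z = y - L⁻¹ • gf y)
    (hδ1 : ‖δ‖ ≤ Real.sqrt (2 * ε / L))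
    (hδ2 : (β₀ / ϑ₁) * ‖cProj m n δ‖ ^ 2 ≤ 2 * ε)
    (hopt : L • (xp - z + δ) + (β₀ / ϑ₁) • cProj m n (xp + δ) = 0)
    (hw : w = θ₀⁻¹ • x - ((1 - θ₀) / θ₀) • xm)
    (hwp : wp = θ₁⁻¹ • xp - ((1 - θ₁) / θ₁) • x)
    (ρ ρp : ℝ)
    (hρ : ρ = f x - f xs + ⟪lam, cProj m n x⟫)
    (hρp : ρp = f xp - f xs + ⟪lam, cProj m n xp⟫) :
    ρp + (ϑ₁ / (2 * β₀)) * ‖(β₀ / ϑ₁) • cProj m n xp - lam‖ ^ 2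
        + (L * θ₁ ^ 2 / 2) * ‖wp - xs‖ ^ 2 ≤
      (1 - θ₁) * ρ + (ϑ₁ / (2 * β₀)) * ‖(β₀ / ϑ₀) • cProj m n x - lam‖ ^ 2 + ε
        + ((L * θ₁ - μ) * θ₁ / 2) * ‖w - xs‖ ^ 2
        + L * θ₁ * Real.sqrt (2 * ε / L) * ‖wp - xs‖ :=
  stmt6_general m n L μ hμ hμL f gf hsmooth hsconv β₀ ε θ₀ θ₁ ϑ₀ ϑ₁ hβ₀ hθ₀ hθ₁ hθ₁' hθ₁μ hϑ₁ hϑ xs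
    lam hxs xm x y z xp δ w wp hy hz hδ1 hδ2 hopt hw hwp ρ ρp hρ hρp
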